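/- arXiv:2408.11193 — 2 statements merged into one kernel-verified Lean document; each statement's English description precedes it below -/
import Mathlib

section
/- Work on a probability space with a finite index set I of size n. For each i ∈ I, let ν_i and η_i be real random variables with E[ν_i] = 0, E[η_i] = 0, and E[ν_i²] < ∞, E[η_i²] < ∞, and assume the family of ℝ²-valued random variables ((ν_i, η_i))_{i∈I} is mutually independent across i. Let R, R_Δ : I → ℝ, let P be a symmetric n×n real matrix satisfying Σ_{j≠i} P_{ij} R(j) = M_{ii} R(i) and Σ_{j≠i} P_{ij} R_Δ(j) = M_{ii} R_Δ(i) for all i, where M_{ii} := 1 − P_{ii}, and set e_i := R_Δ(i) + ν_i, X_i := R(i) + η_i. Then Var(Σ_i Σ_{j≠i} P_{ij} e_i X_j) = Σ_i E[ν_i²] M_{ii}² R(i)² + Σ_i Σ_{j≠i} P_{ij}² ( E[ν_i²] E[η_j²] + E[η_i ν_i] E[η_j ν_j] ) + 2 Σ_i E[ν_i η_i] M_{ii}² R(i) R_Δ(i) + Σ_i E[η_i²] M_{ii}² R_Δ(i)². -/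
open Finset MeasureTheory ProbabilityTheory

section Aux
variable {Ω : Type*} {I : Type*} [MeasurableSpace Ω] {μ : Measure Ω}

lemma aux_icongr {f g : Ω → ℝ} (h : ∀ ω, f ω = g ω) :
    ∫ ω, f ω ∂μ = ∫ ω, g ω ∂μ := by
  congr 1; exact funext h

lemma aux_integrable_mul {f g : Ω → ℝ} (hf : MemLp f 2 μ) (hg : MemLp g 2 μ) :
    Integrable (fun ω => f ω * g ω) μ := by
  haveI : ENNReal.HolderTriple 2 2 1 := ⟨by rw [ENNReal.inv_two_add_inv_two]; simp⟩
  have h : MemLp (g • f) 1 μ :=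
    hf.smul hg
  rw [memLp_one_iff_integrable] at h
  exact h.congr (ae_of_all _ fun ω => by simp [mul_comm])

lemma aux_memℒp_mul {f g : Ω → ℝ} (hfm : Measurable f) (hgm : Measurable g)
    (hf : MemLp f 2 μ) (hg : MemLp g 2 μ) (hind : IndepFun f g μ) :
    MemLp (fun ω => f ω * g ω) 2 μ := by
  rw [memLp_two_iff_integrable_sq (f := fun ω => f ω * g ω) (hfm.mul hgm).aestronglyMeasurable]
  have h1 : Integrable (fun ω => f ω ^ 2) μ := (memLp_two_iff_integrable_sq hf.1).1 hf
  have h2 : Integrable (fun ω => g ω ^ 2) μ := (memLp_two_iff_integrable_sq hg.1).1 hg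
  have hind2 : IndepFun (fun ω => f ω ^ 2) (fun ω => g ω ^ 2) μ :=
    hind.comp (measurable_id.pow_const 2) (measurable_id.pow_const 2)
  have h3 := hind2.integrable_mul h1 h2
  have : (fun ω => (f ω * g ω) ^ 2) = (fun ω => f ω ^ 2) * fun ω => g ω ^ 2 := by
    funext ω; simp [Pi.mul_apply]; ring
  rw [this]; exact h3

variable {V : I → Ω → ℝ × ℝ}

lemma aux_factor2 (hind : iIndepFun (m := fun _ : I => inferInstance) V μ)
    (hm : ∀ i, Measurable (V i)) {i j : I} (hij : i ≠ j)
    (f g : ℝ × ℝ → ℝ) (hf : Measurable f) (hg : Measurable g) :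
    ∫ ω, f (V i ω) * g (V j ω) ∂μ
      = (∫ ω, f (V i ω) ∂μ) * ∫ ω, g (V j ω) ∂μ :=
  ((hind.indepFun hij).comp hf hg).integral_fun_mul_eq_mul_integral
    (hf.comp (hm i)).aestronglyMeasurable (hg.comp (hm j)).aestronglyMeasurable

lemma aux_factor3 (hind : iIndepFun (m := fun _ : I => inferInstance) V μ)
    (hm : ∀ i, Measurable (V i)) {i j k : I} (hij : i ≠ j) (hik : i ≠ k) (hjk : j ≠ k)
    (f g h : ℝ × ℝ → ℝ) (hf : Measurable f) (hg : Measurable g) (hh : Measurable h) :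
    ∫ ω, f (V i ω) * (g (V j ω) * h (V k ω)) ∂μ
      = (∫ ω, f (V i ω) ∂μ) * ((∫ ω, g (V j ω) ∂μ) * ∫ ω, h (V k ω) ∂μ) := by
  have h1 : IndepFun (V i) (fun ω => (V j ω, V k ω)) μ :=
    (hind.indepFun_prodMk hm j k i hij.symm hik.symm).symm
  have h2 : IndepFun (fun ω => f (V i ω)) (fun ω => g (V j ω) * h (V k ω)) μ :=
    h1.comp hf ((hg.comp measurable_fst).mul (hh.comp measurable_snd))
  rw [h2.integral_fun_mul_eq_mul_integral (hf.comp (hm i)).aestronglyMeasurable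
    (((hg.comp measurable_fst).mul (hh.comp measurable_snd)).comp
      ((hm j).prodMk (hm k))).aestronglyMeasurable]
  rw [aux_factor2 hind hm hjk g h hg hh]

lemma aux_factor4 (hind : iIndepFun (m := fun _ : I => inferInstance) V μ)
    (hm : ∀ i, Measurable (V i)) {i j k l : I}
    (hij : i ≠ j) (hkl : k ≠ l) (hik : i ≠ k) (hil : i ≠ l) (hjk : j ≠ k) (hjl : j ≠ l)
    (f g h e : ℝ × ℝ → ℝ) (hf : Measurable f) (hg : Measurable g)
    (hh : Measurable h) (he : Measurable e) :
    ∫ ω, (f (V i ω) * g (V j ω)) * (h (V k ω) * e (V l ω)) ∂μ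
      = ((∫ ω, f (V i ω) ∂μ) * ∫ ω, g (V j ω) ∂μ)
        * ((∫ ω, h (V k ω) ∂μ) * ∫ ω, e (V l ω) ∂μ) := by
  have h1 : IndepFun (fun ω => (V i ω, V j ω)) (fun ω => (V k ω, V l ω)) μ :=
    hind.indepFun_prodMk_prodMk hm i j k l hik hil hjk hjl
  have h2 : IndepFun (fun ω => f (V i ω) * g (V j ω)) (fun ω => h (V k ω) * e (V l ω)) μ :=
    h1.comp ((hf.comp measurable_fst).mul (hg.comp measurable_snd))
      ((hh.comp measurable_fst).mul (he.comp measurable_snd))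
  rw [h2.integral_fun_mul_eq_mul_integral
    (((hf.comp measurable_fst).mul (hg.comp measurable_snd)).comp
      ((hm i).prodMk (hm j))).aestronglyMeasurable
    (((hh.comp measurable_fst).mul (he.comp measurable_snd)).comp
      ((hm k).prodMk (hm l))).aestronglyMeasurable]
  rw [aux_factor2 hind hm hij f g hf hg, aux_factor2 hind hm hkl h e hh he]

lemma aux_sum_pair {I : Type*} [Fintype I] [DecidableEq I] {i j : I} (hij : i ≠ j)
    (g : I → I → ℝ)
    (h0 : ∀ k l, k ≠ l → ¬(k = i ∧ l = j) → ¬(k = j ∧ l = i) → g k l = 0) :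
    ∑ k, ∑ l ∈ Finset.univ.erase k, g k l = g i j + g j i := by
  rw [← Finset.sum_subset (Finset.subset_univ ({i, j} : Finset I))]
  · rw [Finset.sum_insert (by simp [hij]), Finset.sum_singleton]
    congr 1
    · apply Finset.sum_eq_single_of_mem j (Finset.mem_erase.2 ⟨hij.symm, Finset.mem_univ j⟩)
      intro l hl hlj
      exact h0 i l (Ne.symm (Finset.mem_erase.1 hl).1) (fun hc => hlj hc.2) (fun hc => hij hc.1)
    · apply Finset.sum_eq_single_of_mem i (Finset.mem_erase.2 ⟨hij, Finset.mem_univ i⟩)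
      intro l hl hli
      exact h0 j l (Ne.symm (Finset.mem_erase.1 hl).1) (fun hc => hij hc.1.symm)
        (fun hc => hli hc.2)
  · intro k _ hk
    simp only [Finset.mem_insert, Finset.mem_singleton, not_or] at hk
    apply Finset.sum_eq_zero
    intro l hl
    exact h0 k l (Ne.symm (Finset.mem_erase.1 hl).1) (fun hc => hk.1 hc.1) (fun hc => hk.2 hc.1)

end Aux

/-- the LM variance formula specialized to a symmetric
projection-type matrix `P` whose leave-one-out row sums satisfy
`Σ_{j≠i}P_{ij}R(j) = (1−P_{ii})R(i)` and `Σ_{j≠i}P_{ij}R_Δ(j) = (1−P_{ii})R_Δ(i)`: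
`Var(Σ_iΣ_{j≠i}P_{ij}e_iX_j) = Σ_i E[ν_i²]M_{ii}²R(i)²
  + Σ_iΣ_{j≠i}P_{ij}²(E[ν_i²]E[η_j²] + E[η_iν_i]E[η_jν_j])
  + 2Σ_i E[ν_iη_i]M_{ii}²R(i)R_Δ(i) + Σ_i E[η_i²]M_{ii}²R_Δ(i)²`. -/
theorem stmt_12 {Ω : Type*} {I : Type*} [Fintype I] [DecidableEq I]
    [MeasurableSpace Ω] (μ : Measure Ω) [IsProbabilityMeasure μ]
    (ν η : I → Ω → ℝ)
    (hmeas : ∀ i, Measurable (fun ω => (ν i ω, η i ω)))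
    (hν2 : ∀ i, MemLp (ν i) 2 μ) (hη2 : ∀ i, MemLp (η i) 2 μ)
    (hνmean : ∀ i, ∫ ω, ν i ω ∂μ = 0) (hηmean : ∀ i, ∫ ω, η i ω ∂μ = 0)
    (hindep : iIndepFun (m := fun _ : I => inferInstance)
      (fun i ω => (ν i ω, η i ω)) μ)
    (RΔ R : I → ℝ) (P : I → I → ℝ)
    (hPsym : ∀ i j, P i j = P j i)
    (hPR : ∀ i, ∑ j ∈ Finset.univ.erase i, P i j * R j = (1 - P i i) * R i)
    (hPRΔ : ∀ i, ∑ j ∈ Finset.univ.erase i, P i j * RΔ j = (1 - P i i) * RΔ i) :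
    variance (fun ω => ∑ i, ∑ j ∈ Finset.univ.erase i,
        P i j * ((RΔ i + ν i ω) * (R j + η j ω))) μ
      = (∑ i, (∫ ω, (ν i ω) ^ 2 ∂μ) * (1 - P i i) ^ 2 * R i ^ 2)
        + (∑ i, ∑ j ∈ Finset.univ.erase i, (P i j) ^ 2 *
            ((∫ ω, (ν i ω) ^ 2 ∂μ) * (∫ ω, (η j ω) ^ 2 ∂μ)
              + (∫ ω, η i ω * ν i ω ∂μ) * (∫ ω, η j ω * ν j ω ∂μ)))
        + 2 * (∑ i, (∫ ω, ν i ω * η i ω ∂μ) * (1 - P i i) ^ 2 * R i * RΔ i)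
        + (∑ i, (∫ ω, (η i ω) ^ 2 ∂μ) * (1 - P i i) ^ 2 * RΔ i ^ 2) := by
  classical
  -- notation
  set a : I → ℝ := fun i => (1 - P i i) * R i with ha
  set b : I → ℝ := fun i => (1 - P i i) * RΔ i with hb
  set L : Ω → ℝ := fun ω => ∑ i, (a i * ν i ω + b i * η i ω) with hLdef
  set U : Ω → ℝ := fun ω => ∑ i, ∑ j ∈ Finset.univ.erase i, P i j * (ν i ω * η j ω) with hUdef
  set C : ℝ := ∑ i, ∑ j ∈ Finset.univ.erase i, P i j * (RΔ i * R j) with hCdef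
  -- measurability
  have hνm : ∀ i, Measurable (ν i) := fun i => measurable_fst.comp (hmeas i)
  have hηm : ∀ i, Measurable (η i) := fun i => measurable_snd.comp (hmeas i)
  have hmV : ∀ i, Measurable (fun ω => (ν i ω, η i ω)) := hmeas
  -- independence of individual coordinates
  have hIνη : ∀ i j, i ≠ j → IndepFun (ν i) (η j) μ := fun i j hij =>
    (hindep.indepFun hij).comp measurable_fst measurable_snd
  -- MemLp facts
  have hνη2 : ∀ i j, i ≠ j → MemLp (fun ω => ν i ω * η j ω) 2 μ := fun i j hij =>
    aux_memℒp_mul (hνm i) (hηm j) (hν2 i) (hη2 j) (hIνη i j hij)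
  have hLi2 : ∀ i, MemLp (fun ω => a i * ν i ω + b i * η i ω) 2 μ := fun i =>
    ((hν2 i).const_mul (a i)).add ((hη2 i).const_mul (b i))
  have hL2 : MemLp L 2 μ := by
    rw [hLdef]; exact memLp_finset_sum _ (fun i _ => hLi2 i)
  have hU2 : MemLp U 2 μ := by
    rw [hUdef]
    refine memLp_finset_sum _ (fun i _ => memLp_finset_sum _ (fun j hj => ?_))
    exact (hνη2 i j (Finset.mem_erase.1 hj).1.symm).const_mul (P i j)
  -- integrability facts
  have Iν2 : ∀ i, Integrable (fun ω => ν i ω ^ 2) μ := fun i =>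
    (memLp_two_iff_integrable_sq (hν2 i).1).1 (hν2 i)
  have Iη2 : ∀ i, Integrable (fun ω => η i ω ^ 2) μ := fun i =>
    (memLp_two_iff_integrable_sq (hη2 i).1).1 (hη2 i)
  have Iνη : ∀ i, Integrable (fun ω => ν i ω * η i ω) μ := fun i =>
    aux_integrable_mul (hν2 i) (hη2 i)
  have ILi : ∀ i, Integrable (fun ω => a i * ν i ω + b i * η i ω) μ := fun i =>
    (hLi2 i).integrable one_le_two
  have hLimean : ∀ i, ∫ ω, (a i * ν i ω + b i * η i ω) ∂μ = 0 := by
    intro i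
    rw [integral_add (((hν2 i).integrable one_le_two).const_mul (a i))
      (((hη2 i).integrable one_le_two).const_mul (b i)),
      integral_const_mul, integral_const_mul, hνmean, hηmean]
    ring
  -- Step 1 : pointwise decomposition
  have h1 : (fun ω => ∑ i, ∑ j ∈ Finset.univ.erase i,
      P i j * ((RΔ i + ν i ω) * (R j + η j ω))) = fun ω => C + (L ω + U ω) := by
    funext ω
    have split : ∀ i : I, ∑ j ∈ Finset.univ.erase i, P i j * ((RΔ i + ν i ω) * (R j + η j ω))
        = (∑ j ∈ Finset.univ.erase i, P i j * (RΔ i * R j))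
          + ((∑ j ∈ Finset.univ.erase i, P i j * (RΔ i * η j ω))
          + ((∑ j ∈ Finset.univ.erase i, P i j * (ν i ω * R j))
          + ∑ j ∈ Finset.univ.erase i, P i j * (ν i ω * η j ω))) := by
      intro i
      rw [← Finset.sum_add_distrib, ← Finset.sum_add_distrib, ← Finset.sum_add_distrib]
      exact Finset.sum_congr rfl fun j _ => by ring
    rw [Finset.sum_congr rfl fun i _ => split i, Finset.sum_add_distrib,
      Finset.sum_add_distrib, Finset.sum_add_distrib]
    have hν' : (∑ i, ∑ j ∈ Finset.univ.erase i, P i j * (ν i ω * R j)) = ∑ i, a i * ν i ω := by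
      refine Finset.sum_congr rfl fun i _ => ?_
      rw [Finset.sum_congr rfl (fun j _ => show P i j * (ν i ω * R j)
        = ν i ω * (P i j * R j) from by ring), ← Finset.mul_sum, hPR i, ha]
      ring
    have hη' : (∑ i, ∑ j ∈ Finset.univ.erase i, P i j * (RΔ i * η j ω)) = ∑ i, b i * η i ω := by
      rw [Finset.sum_comm' (t' := Finset.univ) (s' := fun j => Finset.univ.erase j)
        (by intro x y; simp only [Finset.mem_univ, Finset.mem_erase, true_and, and_true]
            exact ⟨fun h => Ne.symm h, fun h => Ne.symm h⟩)]
      refine Finset.sum_congr rfl fun j _ => ?_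
      rw [Finset.sum_congr rfl (fun i hi => show P i j * (RΔ i * η j ω)
        = η j ω * (P j i * RΔ i) from by rw [hPsym i j]; ring), ← Finset.mul_sum, hPRΔ j, hb]
      ring
    rw [hν', hη', hLdef, hUdef, hCdef]
    dsimp only
    rw [Finset.sum_add_distrib]
    ring
  rw [h1]
  -- Step 2 : means
  have h3 : ∫ ω, L ω ∂μ = 0 := by
    rw [hLdef]
    dsimp only
    rw [integral_finset_sum _ (fun i _ => ILi i)]
    exact Finset.sum_eq_zero fun i _ => hLimean i
  have h4 : ∫ ω, U ω ∂μ = 0 := by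
    rw [hUdef]
    dsimp only
    rw [integral_finset_sum _ (fun i _ => integrable_finset_sum _ (fun j hj =>
      ((hνη2 i j (Finset.mem_erase.1 hj).1.symm).integrable one_le_two).const_mul (P i j)))]
    refine Finset.sum_eq_zero fun i _ => ?_
    rw [integral_finset_sum _ (fun j hj =>
      ((hνη2 i j (Finset.mem_erase.1 hj).1.symm).integrable one_le_two).const_mul (P i j))]
    refine Finset.sum_eq_zero fun j hj => ?_
    have hij : i ≠ j := (Finset.mem_erase.1 hj).1.symm
    rw [integral_const_mul,
      (hIνη i j hij).integral_fun_mul_eq_mul_integral (hνm i).aestronglyMeasurable (hηm j).aestronglyMeasurable,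
      hνmean]
    ring
  -- Step 3 : variance to second moment
  have hT2 : MemLp (fun ω => L ω + U ω) 2 μ := hL2.add hU2
  have hS2 : MemLp (fun ω => C + (L ω + U ω)) 2 μ := (memLp_const C).add hT2
  have hTint : Integrable (fun ω => L ω + U ω) μ :=
    (hL2.integrable one_le_two).add (hU2.integrable one_le_two)
  have hTmean : ∫ ω, (L ω + U ω) ∂μ = 0 := by
    rw [integral_add (hL2.integrable one_le_two) (hU2.integrable one_le_two), h3, h4]; ring
  have hSmean : ∫ ω, (C + (L ω + U ω)) ∂μ = C := by
    rw [integral_add (integrable_const C) hTint, hTmean, integral_const]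
    simp
  have h5 : variance (fun ω => C + (L ω + U ω)) μ = ∫ ω, (L ω + U ω) ^ 2 ∂μ := by
    rw [variance_eq_integral hS2.1.aemeasurable]
    congr 1
    funext ω
    rw [hSmean]
    ring
  rw [h5]
  -- Step 4 : expand the square
  have ILL : Integrable (fun ω => L ω * L ω) μ := aux_integrable_mul hL2 hL2
  have ILU : Integrable (fun ω => L ω * U ω) μ := aux_integrable_mul hL2 hU2
  have IUU : Integrable (fun ω => U ω * U ω) μ := aux_integrable_mul hU2 hU2
  have h6 : ∫ ω, (L ω + U ω) ^ 2 ∂μ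
      = ∫ ω, L ω * L ω ∂μ + 2 * ∫ ω, L ω * U ω ∂μ + ∫ ω, U ω * U ω ∂μ := by
    rw [aux_icongr (fun ω => show (L ω + U ω) ^ 2
      = L ω * L ω + 2 * (L ω * U ω) + U ω * U ω from by ring)]
    have IA : Integrable (fun ω => L ω * L ω + 2 * (L ω * U ω)) μ := ILL.add (ILU.const_mul 2)
    have IB : Integrable (fun ω => 2 * (L ω * U ω)) μ := ILU.const_mul 2
    rw [integral_add IA IUU, integral_add ILL IB, integral_const_mul]
  -- Step 5 : the linear part
  have h7 : ∫ ω, L ω * L ω ∂μ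
      = ∑ i, (a i ^ 2 * (∫ ω, ν i ω ^ 2 ∂μ) + 2 * (a i * b i) * (∫ ω, ν i ω * η i ω ∂μ)
          + b i ^ 2 * (∫ ω, η i ω ^ 2 ∂μ)) := by
    rw [hLdef]; dsimp only
    rw [aux_icongr (fun ω => Finset.sum_mul_sum Finset.univ Finset.univ
      (fun i => a i * ν i ω + b i * η i ω) (fun k => a k * ν k ω + b k * η k ω))]
    rw [integral_finset_sum _ (fun i _ => integrable_finset_sum _
      (fun k _ => aux_integrable_mul (hLi2 i) (hLi2 k)))]
    refine Finset.sum_congr rfl fun i _ => ?_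
    rw [integral_finset_sum _ (fun k _ => aux_integrable_mul (hLi2 i) (hLi2 k))]
    have offdiag : ∀ k ∈ Finset.univ (α := I), k ≠ i →
        (∫ ω, (a i * ν i ω + b i * η i ω) * (a k * ν k ω + b k * η k ω) ∂μ) = 0 := by
      intro k _ hki
      have key := aux_factor2 hindep hmeas (Ne.symm hki)
        (fun p : ℝ × ℝ => a i * p.1 + b i * p.2) (fun p : ℝ × ℝ => a k * p.1 + b k * p.2)
        ((measurable_fst.const_mul _).add (measurable_snd.const_mul _))
        ((measurable_fst.const_mul _).add (measurable_snd.const_mul _))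
      dsimp only at key
      rw [key, hLimean i, zero_mul]
    rw [Finset.sum_eq_single_of_mem i (Finset.mem_univ i) offdiag]
    rw [aux_icongr (fun ω => show (a i * ν i ω + b i * η i ω) * (a i * ν i ω + b i * η i ω)
        = a i ^ 2 * ν i ω ^ 2 + 2 * (a i * b i) * (ν i ω * η i ω) + b i ^ 2 * η i ω ^ 2
        from by ring)]
    have IA : Integrable (fun ω => a i ^ 2 * ν i ω ^ 2 + 2 * (a i * b i) * (ν i ω * η i ω)) μ :=
      ((Iν2 i).const_mul _).add ((Iνη i).const_mul _)
    have IB : Integrable (fun ω => a i ^ 2 * ν i ω ^ 2) μ := (Iν2 i).const_mul _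
    have IC : Integrable (fun ω => 2 * (a i * b i) * (ν i ω * η i ω)) μ := (Iνη i).const_mul _
    have ID : Integrable (fun ω => b i ^ 2 * η i ω ^ 2) μ := (Iη2 i).const_mul _
    rw [integral_add IA ID, integral_add IB IC,
      integral_const_mul, integral_const_mul, integral_const_mul]
  -- Step 6 : the cross term vanishes
  have h8 : ∫ ω, L ω * U ω ∂μ = 0 := by
    rw [hLdef, hUdef]; dsimp only
    have key : ∀ ω : Ω, (∑ k, (a k * ν k ω + b k * η k ω))
        * (∑ i, ∑ j ∈ Finset.univ.erase i, P i j * (ν i ω * η j ω))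
        = ∑ k, ∑ i, ∑ j ∈ Finset.univ.erase i,
            (a k * ν k ω + b k * η k ω) * (P i j * (ν i ω * η j ω)) := by
      intro ω
      rw [Finset.sum_mul]
      refine Finset.sum_congr rfl fun k _ => ?_
      rw [Finset.mul_sum]
      exact Finset.sum_congr rfl fun i _ => by rw [Finset.mul_sum]
    rw [aux_icongr key]
    have Ibase : ∀ (k i j : I), i ≠ j → Integrable
        (fun ω => (a k * ν k ω + b k * η k ω) * (P i j * (ν i ω * η j ω))) μ :=
      fun k i j hij => aux_integrable_mul (hLi2 k) ((hνη2 i j hij).const_mul (P i j))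
    rw [integral_finset_sum _ (fun k _ => integrable_finset_sum _ (fun i _ =>
      integrable_finset_sum _ (fun j hj => Ibase k i j (Finset.mem_erase.1 hj).1.symm)))]
    refine Finset.sum_eq_zero fun k _ => ?_
    rw [integral_finset_sum _ (fun i _ => integrable_finset_sum _
      (fun j hj => Ibase k i j (Finset.mem_erase.1 hj).1.symm))]
    refine Finset.sum_eq_zero fun i _ => ?_
    rw [integral_finset_sum _ (fun j hj => Ibase k i j (Finset.mem_erase.1 hj).1.symm)]
    refine Finset.sum_eq_zero fun j hj => ?_
    have hij : i ≠ j := (Finset.mem_erase.1 hj).1.symm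
    rw [aux_icongr (fun ω => show (a k * ν k ω + b k * η k ω) * (P i j * (ν i ω * η j ω))
        = P i j * ((a k * ν k ω + b k * η k ω) * (ν i ω * η j ω)) from by ring),
      integral_const_mul]
    rcases eq_or_ne k i with rfl | hki
    · rw [aux_icongr (fun ω => show (a k * ν k ω + b k * η k ω) * (ν k ω * η j ω)
          = ((a k * ν k ω + b k * η k ω) * ν k ω) * η j ω from by ring)]
      have key2 := aux_factor2 hindep hmeas hij
        (fun p : ℝ × ℝ => (a k * p.1 + b k * p.2) * p.1) (fun p : ℝ × ℝ => p.2)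
        (((measurable_fst.const_mul _).add (measurable_snd.const_mul _)).mul measurable_fst)
        measurable_snd
      dsimp only at key2
      rw [key2, hηmean j, mul_zero, mul_zero]
    · rcases eq_or_ne k j with rfl | hkj
      · rw [aux_icongr (fun ω => show (a k * ν k ω + b k * η k ω) * (ν i ω * η k ω)
            = ν i ω * ((a k * ν k ω + b k * η k ω) * η k ω) from by ring)]
        have key2 := aux_factor2 hindep hmeas hij
          (fun p : ℝ × ℝ => p.1) (fun p : ℝ × ℝ => (a k * p.1 + b k * p.2) * p.2)
          measurable_fst
          (((measurable_fst.const_mul _).add (measurable_snd.const_mul _)).mul measurable_snd)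
        dsimp only at key2
        rw [key2, hνmean i, zero_mul, mul_zero]
      · have key2 := aux_factor3 hindep hmeas hki hkj hij
          (fun p : ℝ × ℝ => a k * p.1 + b k * p.2) (fun p : ℝ × ℝ => p.1) (fun p : ℝ × ℝ => p.2)
          ((measurable_fst.const_mul _).add (measurable_snd.const_mul _))
          measurable_fst measurable_snd
        dsimp only at key2
        rw [key2, hνmean i, zero_mul, mul_zero, mul_zero]
  -- Step 7 : the quadratic part
  have h9 : ∫ ω, U ω * U ω ∂μ
      = ∑ i, ∑ j ∈ Finset.univ.erase i, (P i j) ^ 2 *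
          ((∫ ω, ν i ω ^ 2 ∂μ) * (∫ ω, η j ω ^ 2 ∂μ)
            + (∫ ω, η i ω * ν i ω ∂μ) * (∫ ω, η j ω * ν j ω ∂μ)) := by
    rw [hUdef]; dsimp only
    have key : ∀ ω : Ω, (∑ i, ∑ j ∈ Finset.univ.erase i, P i j * (ν i ω * η j ω))
        * (∑ k, ∑ l ∈ Finset.univ.erase k, P k l * (ν k ω * η l ω))
        = ∑ i, ∑ j ∈ Finset.univ.erase i, ∑ k, ∑ l ∈ Finset.univ.erase k,
            (P i j * (ν i ω * η j ω)) * (P k l * (ν k ω * η l ω)) := by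
      intro ω
      rw [Finset.sum_mul]
      refine Finset.sum_congr rfl fun i _ => ?_
      rw [Finset.sum_mul]
      refine Finset.sum_congr rfl fun j _ => ?_
      rw [Finset.mul_sum]
      exact Finset.sum_congr rfl fun k _ => by rw [Finset.mul_sum]
    rw [aux_icongr key]
    have Ibase : ∀ (i j k l : I), i ≠ j → k ≠ l → Integrable
        (fun ω => (P i j * (ν i ω * η j ω)) * (P k l * (ν k ω * η l ω))) μ :=
      fun i j k l hij hkl => aux_integrable_mul ((hνη2 i j hij).const_mul (P i j))
        ((hνη2 k l hkl).const_mul (P k l))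
    rw [integral_finset_sum _ (fun i _ => integrable_finset_sum _ (fun j hj =>
      integrable_finset_sum _ (fun k _ => integrable_finset_sum _ (fun l hl =>
        Ibase i j k l (Finset.mem_erase.1 hj).1.symm (Finset.mem_erase.1 hl).1.symm))))]
    refine Finset.sum_congr rfl fun i _ => ?_
    rw [integral_finset_sum _ (fun j hj => integrable_finset_sum _ (fun k _ =>
      integrable_finset_sum _ (fun l hl =>
        Ibase i j k l (Finset.mem_erase.1 hj).1.symm (Finset.mem_erase.1 hl).1.symm)))]
    refine Finset.sum_congr rfl fun j hj => ?_
    have hij : i ≠ j := (Finset.mem_erase.1 hj).1.symm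
    rw [integral_finset_sum _ (fun k _ => integrable_finset_sum _ (fun l hl =>
      Ibase i j k l hij (Finset.mem_erase.1 hl).1.symm))]
    rw [Finset.sum_congr rfl (fun k _ => integral_finset_sum _ (fun l hl =>
      Ibase i j k l hij (Finset.mem_erase.1 hl).1.symm))]
    have hzero : ∀ k l : I, k ≠ l → ¬(k = i ∧ l = j) → ¬(k = j ∧ l = i) →
        (∫ ω, (P i j * (ν i ω * η j ω)) * (P k l * (ν k ω * η l ω)) ∂μ) = 0 := by
      intro k l hkl hne1 hne2
      rw [aux_icongr (fun ω => show (P i j * (ν i ω * η j ω)) * (P k l * (ν k ω * η l ω))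
          = (P i j * P k l) * ((ν i ω * η j ω) * (ν k ω * η l ω)) from by ring),
        integral_const_mul]
      suffices hs : (∫ ω, (ν i ω * η j ω) * (ν k ω * η l ω) ∂μ) = 0 by rw [hs, mul_zero]
      rcases eq_or_ne k i with rfl | hki
      · -- k = i
        have hlj : l ≠ j := fun h => hne1 ⟨rfl, h⟩
        rw [aux_icongr (fun ω => show (ν k ω * η j ω) * (ν k ω * η l ω)
            = ν k ω ^ 2 * (η j ω * η l ω) from by ring)]
        have key2 := aux_factor3 hindep hmeas hij hkl (Ne.symm hlj)
          (fun p : ℝ × ℝ => p.1 ^ 2) (fun p : ℝ × ℝ => p.2) (fun p : ℝ × ℝ => p.2)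
          (measurable_fst.pow_const 2) measurable_snd measurable_snd
        dsimp only at key2
        rw [key2, hηmean j, zero_mul, mul_zero]
      · rcases eq_or_ne k j with rfl | hkj
        · -- k = j
          have hli : l ≠ i := fun h => hne2 ⟨rfl, h⟩
          rw [aux_icongr (fun ω => show (ν i ω * η k ω) * (ν k ω * η l ω)
              = ν i ω * ((ν k ω * η k ω) * η l ω) from by ring)]
          have key2 := aux_factor3 hindep hmeas hij (Ne.symm hli) hkl
            (fun p : ℝ × ℝ => p.1) (fun p : ℝ × ℝ => p.1 * p.2) (fun p : ℝ × ℝ => p.2)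
            measurable_fst (measurable_fst.mul measurable_snd) measurable_snd
          dsimp only at key2
          rw [key2, hνmean i, zero_mul]
        · rcases eq_or_ne l i with rfl | hli
          · -- l = i
            rw [aux_icongr (fun ω => show (ν l ω * η j ω) * (ν k ω * η l ω)
                = (ν l ω * η l ω) * (η j ω * ν k ω) from by ring)]
            have key2 := aux_factor3 hindep hmeas hij (Ne.symm hki) (Ne.symm hkj)
              (fun p : ℝ × ℝ => p.1 * p.2) (fun p : ℝ × ℝ => p.2) (fun p : ℝ × ℝ => p.1)
              (measurable_fst.mul measurable_snd) measurable_snd measurable_fst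
            dsimp only at key2
            rw [key2, hηmean j, zero_mul, mul_zero]
          · rcases eq_or_ne l j with rfl | hlj
            · -- l = j
              rw [aux_icongr (fun ω => show (ν i ω * η l ω) * (ν k ω * η l ω)
                  = η l ω ^ 2 * (ν i ω * ν k ω) from by ring)]
              have key2 := aux_factor3 hindep hmeas (Ne.symm hij) (Ne.symm hkj) (Ne.symm hki)
                (fun p : ℝ × ℝ => p.2 ^ 2) (fun p : ℝ × ℝ => p.1) (fun p : ℝ × ℝ => p.1)
                (measurable_snd.pow_const 2) measurable_fst measurable_fst
              dsimp only at key2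
              rw [key2, hνmean i, zero_mul, mul_zero]
            · -- all distinct
              have key2 := aux_factor4 hindep hmeas hij hkl (Ne.symm hki) (Ne.symm hli)
                (Ne.symm hkj) (Ne.symm hlj)
                (fun p : ℝ × ℝ => p.1) (fun p : ℝ × ℝ => p.2)
                (fun p : ℝ × ℝ => p.1) (fun p : ℝ × ℝ => p.2)
                measurable_fst measurable_snd measurable_fst measurable_snd
              dsimp only at key2
              rw [key2, hνmean i, zero_mul, zero_mul]
    have hp := aux_sum_pair hij
      (fun k l => ∫ ω, (P i j * (ν i ω * η j ω)) * (P k l * (ν k ω * η l ω)) ∂μ) hzero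
    rw [hp]
    have hgd : ∫ ω, (P i j * (ν i ω * η j ω)) * (P i j * (ν i ω * η j ω)) ∂μ
        = P i j ^ 2 * ((∫ ω, ν i ω ^ 2 ∂μ) * ∫ ω, η j ω ^ 2 ∂μ) := by
      rw [aux_icongr (fun ω => show (P i j * (ν i ω * η j ω)) * (P i j * (ν i ω * η j ω))
          = P i j ^ 2 * (ν i ω ^ 2 * η j ω ^ 2) from by ring), integral_const_mul]
      have key2 := aux_factor2 hindep hmeas hij (fun p : ℝ × ℝ => p.1 ^ 2)
        (fun p : ℝ × ℝ => p.2 ^ 2) (measurable_fst.pow_const 2) (measurable_snd.pow_const 2)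
      dsimp only at key2
      rw [key2]
    have hgo : ∫ ω, (P i j * (ν i ω * η j ω)) * (P j i * (ν j ω * η i ω)) ∂μ
        = (P i j * P j i) * ((∫ ω, η i ω * ν i ω ∂μ) * ∫ ω, η j ω * ν j ω ∂μ) := by
      rw [aux_icongr (fun ω => show (P i j * (ν i ω * η j ω)) * (P j i * (ν j ω * η i ω))
          = (P i j * P j i) * ((η i ω * ν i ω) * (η j ω * ν j ω)) from by ring),
        integral_const_mul]
      have key2 := aux_factor2 hindep hmeas hij (fun p : ℝ × ℝ => p.2 * p.1)
        (fun p : ℝ × ℝ => p.2 * p.1) (measurable_snd.mul measurable_fst)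
        (measurable_snd.mul measurable_fst)
      dsimp only at key2
      rw [key2]
    rw [hgd, hgo, ← hPsym i j]
    ring
  rw [h6, h7, h8, h9]
  have expand : ∀ i : I,
      a i ^ 2 * (∫ ω, ν i ω ^ 2 ∂μ) + 2 * (a i * b i) * (∫ ω, ν i ω * η i ω ∂μ)
        + b i ^ 2 * (∫ ω, η i ω ^ 2 ∂μ)
      = (∫ ω, ν i ω ^ 2 ∂μ) * (1 - P i i) ^ 2 * R i ^ 2
        + 2 * ((∫ ω, ν i ω * η i ω ∂μ) * (1 - P i i) ^ 2 * R i * RΔ i)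
        + (∫ ω, η i ω ^ 2 ∂μ) * (1 - P i i) ^ 2 * RΔ i ^ 2 := by
    intro i; simp only [ha, hb]; ring
  rw [Finset.sum_congr rfl fun i _ => expand i, Finset.sum_add_distrib,
    Finset.sum_add_distrib, ← Finset.mul_sum]
  ring
end

section
/- Work on a probability space with a finite index set I of size n. For each i ∈ I, let ν_i and η_i be real random variables with E[ν_i] = 0, E[η_i] = 0, and E[ν_i²] < ∞, E[η_i²] < ∞, and assume the family of ℝ²-valued random variables ((ν_i, η_i))_{i∈I} is mutually independent across i. Let R, R_Δ : I → ℝ, let P be an n×n real matrix satisfying Σ_{j≠i} P_{ij} R(j) = M_{ii} R(i) for all i, where M_{ii} := 1 − P_{ii}, and set e_i := R_Δ(i) + ν_i, X_i := R(i) + η_i. Define Ψ̂_MO := Σ_i ( Σ_{j≠i} P_{ij} X_j )² e_i² + Σ_i Σ_{j≠i} P_{ij}² X_i e_i X_j e_j. Then E[Ψ̂_MO] = Σ_i M_{ii}² R(i)² R_Δ(i)² + Σ_i M_{ii}² R(i)² E[ν_i²] + Σ_i Σ_{j≠i} P_{ij}² E[ν_i²] E[η_j²] + Σ_i Σ_{j≠i}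 P_{ij}² R_Δ(i)² E[η_j²] + Σ_i Σ_{j≠i} P_{ij}² ( R(i) R_Δ(i) R(j) R_Δ(j) + E[η_i ν_i] R(j) R_Δ(j) + R(i) R_Δ(i) E[η_j ν_j] + E[η_i ν_i] E[η_j ν_j] ). -/
open Finset MeasureTheory ProbabilityTheory

lemma aux_l2_mul {Ω : Type*} [MeasurableSpace Ω] {μ : Measure Ω} {f g : Ω → ℝ}
    (hf : MemLp f 2 μ) (hg : MemLp g 2 μ) : Integrable (fun ω => f ω * g ω) μ := by
  have h : MemLp (g • f) 1 μ := hf.smul hg (hpqr := ⟨by norm_num [ENNReal.inv_two_add_inv_two]⟩)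
  have := memLp_one_iff_integrable.mp h
  simpa [Pi.smul_apply, smul_eq_mul, mul_comm, Pi.mul_def] using this

section
variable {Ω : Type*} {I : Type*} [MeasurableSpace Ω] {μ : Measure Ω}
  {ν η : I → Ω → ℝ}

lemma aux_pair
    (hindep : iIndepFun (fun i ω => (ν i ω, η i ω)) μ)
    {i j : I} (hij : i ≠ j) (f g : ℝ × ℝ → ℝ) (mf : Measurable f) (mg : Measurable g)
    (hf : Integrable (fun ω => f (ν i ω, η i ω)) μ)
    (hg : Integrable (fun ω => g (ν j ω, η j ω)) μ) :
    Integrable (fun ω => f (ν i ω, η i ω) * g (ν j ω, η j ω)) μ ∧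
    ∫ ω, f (ν i ω, η i ω) * g (ν j ω, η j ω) ∂μ
      = (∫ ω, f (ν i ω, η i ω) ∂μ) * ∫ ω, g (ν j ω, η j ω) ∂μ := by
  have hI : IndepFun (fun ω => f (ν i ω, η i ω)) (fun ω => g (ν j ω, η j ω)) μ :=
    (hindep.indepFun hij).comp mf mg
  exact ⟨hI.integrable_mul hf hg, hI.integral_fun_mul_eq_mul_integral hf.1 hg.1⟩

lemma aux_triple (hmeas : ∀ i, Measurable (fun ω => (ν i ω, η i ω)))
    (hindep : iIndepFun (fun i ω => (ν i ω, η i ω)) μ)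
    {i j k : I} (hji : j ≠ i) (hki : k ≠ i) (hkj : k ≠ j)
    (f g h : ℝ × ℝ → ℝ) (mf : Measurable f) (mg : Measurable g) (mh : Measurable h)
    (hf : Integrable (fun ω => f (ν i ω, η i ω)) μ)
    (hg : Integrable (fun ω => g (ν j ω, η j ω)) μ)
    (hh : Integrable (fun ω => h (ν k ω, η k ω)) μ) :
    Integrable (fun ω => f (ν i ω, η i ω) * g (ν j ω, η j ω) * h (ν k ω, η k ω)) μ ∧
    ∫ ω, f (ν i ω, η i ω) * g (ν j ω, η j ω) * h (ν k ω, η k ω) ∂μ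
      = (∫ ω, f (ν i ω, η i ω) ∂μ) * (∫ ω, g (ν j ω, η j ω) ∂μ)
          * ∫ ω, h (ν k ω, η k ω) ∂μ := by
  classical
  set F : I → ℝ × ℝ → ℝ := fun l => if l = i then f else if l = j then g else h with hF
  have mF : ∀ l, Measurable (F l) := by
    intro l
    simp only [hF]
    split_ifs <;> assumption
  have hW : iIndepFun
      (fun l => F l ∘ (fun ω => (ν l ω, η l ω))) μ := hindep.comp F mF
  have hWmeas : ∀ l, Measurable (F l ∘ (fun ω => (ν l ω, η l ω))) :=
    fun l => (mF l).comp (hmeas l)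
  have hWi : (F i ∘ fun ω => (ν i ω, η i ω)) = fun ω => f (ν i ω, η i ω) := by
    funext ω; simp [hF]
  have hWj : (F j ∘ fun ω => (ν j ω, η j ω)) = fun ω => g (ν j ω, η j ω) := by
    funext ω; simp [hF, hji]
  have hWk : (F k ∘ fun ω => (ν k ω, η k ω)) = fun ω => h (ν k ω, η k ω) := by
    funext ω; simp [hF, hki, hkj]
  have hIij : IndepFun (fun ω => f (ν i ω, η i ω)) (fun ω => g (ν j ω, η j ω)) μ := by
    have := hW.indepFun (Ne.symm hji)
    rwa [hWi, hWj] at this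
  have hIijk : IndepFun ((fun ω => f (ν i ω, η i ω)) * (fun ω => g (ν j ω, η j ω)))
      (fun ω => h (ν k ω, η k ω)) μ := by
    have := hW.indepFun_mul_left hWmeas i j k (Ne.symm hki) (Ne.symm hkj)
    rwa [hWi, hWj, hWk] at this
  have hint : Integrable ((fun ω => f (ν i ω, η i ω)) * (fun ω => g (ν j ω, η j ω))) μ :=
    hIij.integrable_mul hf hg
  have hmulint := hIijk.integrable_mul hint hh
  have hval := hIijk.integral_mul_eq_mul_integral hint.1 hh.1
  have hval2 := hIij.integral_mul_eq_mul_integral hf.1 hg.1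
  refine ⟨hmulint, ?_⟩
  have key : (∫ ω, f (ν i ω, η i ω) * g (ν j ω, η j ω) * h (ν k ω, η k ω) ∂μ)
      = integral μ (((fun ω => f (ν i ω, η i ω)) * fun ω => g (ν j ω, η j ω))
          * fun ω => h (ν k ω, η k ω)) := rfl
  rw [key, hval, hval2]

end

/-- expectation of the Matsushita–Otsu variance estimator
`Ψ̂_MO = Σ_i (Σ_{j≠i}P_{ij}X_j)² e_i² + Σ_iΣ_{j≠i}P_{ij}² X_i e_i X_j e_j`
evaluated at the null, where `e_i = R_Δ(i) + ν_i`, `X_i = R(i) + η_i` with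
mean-zero square-integrable errors independent across observations and
`Σ_{j≠i}P_{ij}R(j) = (1−P_{ii})R(i)`. -/
theorem stmt_17 {Ω : Type*} {I : Type*} [Fintype I] [DecidableEq I]
    [MeasurableSpace Ω] (μ : Measure Ω) [IsProbabilityMeasure μ]
    (ν η : I → Ω → ℝ)
    (hmeas : ∀ i, Measurable (fun ω => (ν i ω, η i ω)))
    (hν2 : ∀ i, MemLp (ν i) 2 μ) (hη2 : ∀ i, MemLp (η i) 2 μ)
    (hνmean : ∀ i, ∫ ω, ν i ω ∂μ = 0) (hηmean : ∀ i, ∫ ω, η i ω ∂μ = 0)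
    (hindep : iIndepFun
      (fun i ω => (ν i ω, η i ω)) μ)
    (RΔ R : I → ℝ) (P : I → I → ℝ)
    (hPR : ∀ i, ∑ j ∈ Finset.univ.erase i, P i j * R j = (1 - P i i) * R i) :
    (∫ ω, ((∑ i, (∑ j ∈ Finset.univ.erase i, P i j * (R j + η j ω)) ^ 2 *
            (RΔ i + ν i ω) ^ 2)
        + ∑ i, ∑ j ∈ Finset.univ.erase i, (P i j) ^ 2 *
            ((R i + η i ω) * (RΔ i + ν i ω)) *
            ((R j + η j ω) * (RΔ j + ν j ω))) ∂μ)
      = (∑ i, (1 - P i i) ^ 2 * R i ^ 2 * RΔ i ^ 2)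
        + (∑ i, (1 - P i i) ^ 2 * R i ^ 2 * (∫ ω, (ν i ω) ^ 2 ∂μ))
        + (∑ i, ∑ j ∈ Finset.univ.erase i, (P i j) ^ 2 *
            (∫ ω, (ν i ω) ^ 2 ∂μ) * (∫ ω, (η j ω) ^ 2 ∂μ))
        + (∑ i, ∑ j ∈ Finset.univ.erase i, (P i j) ^ 2 *
            RΔ i ^ 2 * (∫ ω, (η j ω) ^ 2 ∂μ))
        + (∑ i, ∑ j ∈ Finset.univ.erase i, (P i j) ^ 2 *
            (R i * RΔ i * R j * RΔ j
              + (∫ ω, η i ω * ν i ω ∂μ) * R j * RΔ j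
              + R i * RΔ i * (∫ ω, η j ω * ν j ω ∂μ)
              + (∫ ω, η i ω * ν i ω ∂μ) * (∫ ω, η j ω * ν j ω ∂μ))) := by
  classical
  have mν : ∀ i, Measurable (ν i) := fun i => (measurable_fst.comp (hmeas i))
  have mη : ∀ i, Measurable (η i) := fun i => (measurable_snd.comp (hmeas i))
  -- L² facts
  have hXL2 : ∀ i, MemLp (fun ω => R i + η i ω) 2 μ :=
    fun i => (memLp_const (R i)).add (hη2 i)
  have heL2 : ∀ i, MemLp (fun ω => RΔ i + ν i ω) 2 μ :=
    fun i => (memLp_const (RΔ i)).add (hν2 i)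
  have hXint : ∀ i, Integrable (fun ω => R i + η i ω) μ :=
    fun i => (hXL2 i).integrable one_le_two
  have he2int : ∀ i, Integrable (fun ω => (RΔ i + ν i ω) ^ 2) μ :=
    fun i => (heL2 i).integrable_sq
  have hXXint : ∀ i j, Integrable (fun ω => (R i + η i ω) * (R j + η j ω)) μ :=
    fun i j => aux_l2_mul (hXL2 i) (hXL2 j)
  have hXeint : ∀ i, Integrable (fun ω => (R i + η i ω) * (RΔ i + ν i ω)) μ :=
    fun i => aux_l2_mul (hXL2 i) (heL2 i)
  -- basic expectations
  have hEX : ∀ i, ∫ ω, (R i + η i ω) ∂μ = R i := by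
    intro i
    rw [integral_add (integrable_const _) ((hη2 i).integrable one_le_two), hηmean i,
      integral_const]
    simp
  have hEe2 : ∀ i, ∫ ω, (RΔ i + ν i ω) ^ 2 ∂μ = RΔ i ^ 2 + ∫ ω, (ν i ω) ^ 2 ∂μ := by
    intro i
    have h1 : Integrable (fun ω => (ν i ω) ^ 2) μ := (hν2 i).integrable_sq
    have h2 : Integrable (ν i) μ := (hν2 i).integrable one_le_two
    have : (fun ω => (RΔ i + ν i ω) ^ 2)
        = fun ω => RΔ i ^ 2 + ((2 * RΔ i) * ν i ω + (ν i ω) ^ 2) := by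
      funext ω; ring
    have ha : Integrable (fun ω => (2 * RΔ i) * ν i ω) μ := h2.const_mul _
    have hb : Integrable (fun ω => (2 * RΔ i) * ν i ω + (ν i ω) ^ 2) μ := ha.add h1
    rw [this, integral_add (integrable_const _) hb, integral_add ha h1]
    simp [integral_const_mul, hνmean i]
  have hEX2 : ∀ i, ∫ ω, (R i + η i ω) * (R i + η i ω) ∂μ
      = R i ^ 2 + ∫ ω, (η i ω) ^ 2 ∂μ := by
    intro i
    have h1 : Integrable (fun ω => (η i ω) ^ 2) μ := (hη2 i).integrable_sq
    have h2 : Integrable (η i) μ := (hη2 i).integrable one_le_two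
    have : (fun ω => (R i + η i ω) * (R i + η i ω))
        = fun ω => R i ^ 2 + ((2 * R i) * η i ω + (η i ω) ^ 2) := by
      funext ω; ring
    have ha : Integrable (fun ω => (2 * R i) * η i ω) μ := h2.const_mul _
    have hb : Integrable (fun ω => (2 * R i) * η i ω + (η i ω) ^ 2) μ := ha.add h1
    rw [this, integral_add (integrable_const _) hb, integral_add ha h1]
    simp [integral_const_mul, hηmean i]
  have hEXe : ∀ i, ∫ ω, (R i + η i ω) * (RΔ i + ν i ω) ∂μ
      = R i * RΔ i + ∫ ω, η i ω * ν i ω ∂μ := by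
    intro i
    have h1 : Integrable (fun ω => η i ω * ν i ω) μ := aux_l2_mul (hη2 i) (hν2 i)
    have h2 : Integrable (η i) μ := (hη2 i).integrable one_le_two
    have h3 : Integrable (ν i) μ := (hν2 i).integrable one_le_two
    have : (fun ω => (R i + η i ω) * (RΔ i + ν i ω))
        = fun ω => R i * RΔ i + ((R i * ν i ω + RΔ i * η i ω) + η i ω * ν i ω) := by
      funext ω; ring
    have ha : Integrable (fun ω => R i * ν i ω) μ := h3.const_mul _
    have hb : Integrable (fun ω => RΔ i * η i ω) μ := h2.const_mul _
    have hc : Integrable (fun ω => R i * ν i ω + RΔ i * η i ω) μ := ha.add hb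
    have hd : Integrable (fun ω => (R i * ν i ω + RΔ i * η i ω) + η i ω * ν i ω) μ :=
      hc.add h1
    rw [this, integral_add (integrable_const _) hd,
      integral_add hc h1, integral_add ha hb]
    simp [integral_const_mul, hνmean i, hηmean i]
  -- measurable auxiliary functions on ℝ²
  have mfX : ∀ i, Measurable (fun p : ℝ × ℝ => R i + p.2) := by
    intro i; fun_prop
  have mfXX : ∀ i, Measurable (fun p : ℝ × ℝ => (R i + p.2) * (R i + p.2)) := by
    intro i; fun_prop
  have mfe2 : ∀ i, Measurable (fun p : ℝ × ℝ => (RΔ i + p.1) ^ 2) := by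
    intro i; fun_prop
  have mfXe : ∀ i, Measurable (fun p : ℝ × ℝ => (R i + p.2) * (RΔ i + p.1)) := by
    intro i; fun_prop
  -- monomial integrals for part A
  have MA : ∀ i j k : I, j ≠ i → k ≠ i →
      Integrable (fun ω => (R j + η j ω) * (R k + η k ω) * (RΔ i + ν i ω) ^ 2) μ ∧
      ∫ ω, (R j + η j ω) * (R k + η k ω) * (RΔ i + ν i ω) ^ 2 ∂μ
        = (R j * R k + if k = j then (∫ ω, (η j ω) ^ 2 ∂μ) else 0)
            * (RΔ i ^ 2 + ∫ ω, (ν i ω) ^ 2 ∂μ) := by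
    intro i j k hji hki
    by_cases hkj : k = j
    · subst hkj
      have := aux_pair hindep hki (fun p : ℝ × ℝ => (R k + p.2) * (R k + p.2))
        (fun p : ℝ × ℝ => (RΔ i + p.1) ^ 2) (mfXX k) (mfe2 i) (hXXint k k) (he2int i)
      have hv : ∫ ω, (R k + η k ω) * (R k + η k ω) * (RΔ i + ν i ω) ^ 2 ∂μ
          = (∫ ω, (R k + η k ω) * (R k + η k ω) ∂μ)
            * ∫ ω, (RΔ i + ν i ω) ^ 2 ∂μ := this.2
      refine ⟨this.1, ?_⟩
      rw [hv, hEX2 k, hEe2 i]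
      simp [sq]
    · have := aux_triple hmeas hindep (hkj : k ≠ j) (Ne.symm hji)
        (Ne.symm hki) (fun p : ℝ × ℝ => R j + p.2) (fun p : ℝ × ℝ => R k + p.2)
        (fun p : ℝ × ℝ => (RΔ i + p.1) ^ 2) (mfX j) (mfX k) (mfe2 i)
        (hXint j) (hXint k) (he2int i)
      have hv : ∫ ω, (R j + η j ω) * (R k + η k ω) * (RΔ i + ν i ω) ^ 2 ∂μ
          = (∫ ω, (R j + η j ω) ∂μ) * (∫ ω, (R k + η k ω) ∂μ)
            * ∫ ω, (RΔ i + ν i ω) ^ 2 ∂μ := this.2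
      refine ⟨this.1, ?_⟩
      rw [hv, hEX j, hEX k, hEe2 i]
      simp [hkj]
  -- monomial integrals for part B
  have MB : ∀ i j : I, j ≠ i →
      Integrable (fun ω => ((R i + η i ω) * (RΔ i + ν i ω))
        * ((R j + η j ω) * (RΔ j + ν j ω))) μ ∧
      ∫ ω, ((R i + η i ω) * (RΔ i + ν i ω)) * ((R j + η j ω) * (RΔ j + ν j ω)) ∂μ
        = (R i * RΔ i + ∫ ω, η i ω * ν i ω ∂μ)
            * (R j * RΔ j + ∫ ω, η j ω * ν j ω ∂μ) := by
    intro i j hji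
    have := aux_pair hindep (Ne.symm hji) (fun p : ℝ × ℝ => (R i + p.2) * (RΔ i + p.1))
      (fun p : ℝ × ℝ => (R j + p.2) * (RΔ j + p.1)) (mfXe i) (mfXe j)
      (hXeint i) (hXeint j)
    have hv : ∫ ω, ((R i + η i ω) * (RΔ i + ν i ω))
          * ((R j + η j ω) * (RΔ j + ν j ω)) ∂μ
        = (∫ ω, (R i + η i ω) * (RΔ i + ν i ω) ∂μ)
          * ∫ ω, (R j + η j ω) * (RΔ j + ν j ω) ∂μ := this.2
    refine ⟨this.1, ?_⟩
    rw [hv, hEXe i, hEXe j]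
  -- integrability of the pieces
  have intA : ∀ i j k : I, j ∈ Finset.univ.erase i → k ∈ Finset.univ.erase i →
      Integrable (fun ω => P i j * P i k *
        ((R j + η j ω) * (R k + η k ω) * (RΔ i + ν i ω) ^ 2)) μ :=
    fun i j k hj hk =>
      ((MA i j k (Finset.ne_of_mem_erase hj) (Finset.ne_of_mem_erase hk)).1).const_mul _
  have intB : ∀ i j : I, j ∈ Finset.univ.erase i →
      Integrable (fun ω => (P i j) ^ 2 * (((R i + η i ω) * (RΔ i + ν i ω))
        * ((R j + η j ω) * (RΔ j + ν j ω)))) μ :=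
    fun i j hj => ((MB i j (Finset.ne_of_mem_erase hj)).1).const_mul _
  -- Step 1: pointwise rewriting of the integrand
  have step1 : (∫ ω, ((∑ i, (∑ j ∈ Finset.univ.erase i, P i j * (R j + η j ω)) ^ 2 *
            (RΔ i + ν i ω) ^ 2)
        + ∑ i, ∑ j ∈ Finset.univ.erase i, (P i j) ^ 2 *
            ((R i + η i ω) * (RΔ i + ν i ω)) *
            ((R j + η j ω) * (RΔ j + ν j ω))) ∂μ)
      = ∫ ω, ((∑ i, ∑ j ∈ Finset.univ.erase i, ∑ k ∈ Finset.univ.erase i,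
            P i j * P i k * ((R j + η j ω) * (R k + η k ω) * (RΔ i + ν i ω) ^ 2))
        + ∑ i, ∑ j ∈ Finset.univ.erase i, (P i j) ^ 2 *
            (((R i + η i ω) * (RΔ i + ν i ω)) *
            ((R j + η j ω) * (RΔ j + ν j ω)))) ∂μ := by
    congr 1
    funext ω
    congr 1
    · refine Finset.sum_congr rfl fun i _ => ?_
      rw [sq, Finset.sum_mul_sum, Finset.sum_mul]
      refine Finset.sum_congr rfl fun j _ => ?_
      rw [Finset.sum_mul]
      exact Finset.sum_congr rfl fun k _ => by ring
    · exact Finset.sum_congr rfl fun i _ =>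
        Finset.sum_congr rfl fun j _ => by ring
  rw [step1]
  -- Step 2: split the integral and push through the sums
  rw [integral_add
    (integrable_finset_sum _ fun i _ => integrable_finset_sum _ fun j hj =>
      integrable_finset_sum _ fun k hk => intA i j k hj hk)
    (integrable_finset_sum _ fun i _ => integrable_finset_sum _ fun j hj => intB i j hj)]
  rw [integral_finset_sum _ (fun i _ => integrable_finset_sum _ fun j hj =>
      integrable_finset_sum _ fun k hk => intA i j k hj hk)]
  rw [integral_finset_sum _ (fun i _ => integrable_finset_sum _ fun j hj => intB i j hj)]
  -- Step 3: evaluate each integral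
  have valA : ∀ i : I, (∫ ω, ∑ j ∈ Finset.univ.erase i, ∑ k ∈ Finset.univ.erase i,
        P i j * P i k * ((R j + η j ω) * (R k + η k ω) * (RΔ i + ν i ω) ^ 2) ∂μ)
      = ∑ j ∈ Finset.univ.erase i, ∑ k ∈ Finset.univ.erase i,
          P i j * P i k * ((R j * R k + if k = j then (∫ ω, (η j ω) ^ 2 ∂μ) else 0)
            * (RΔ i ^ 2 + ∫ ω, (ν i ω) ^ 2 ∂μ)) := by
    intro i
    rw [integral_finset_sum _ (fun j hj => integrable_finset_sum _ fun k hk =>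
      intA i j k hj hk)]
    refine Finset.sum_congr rfl fun j hj => ?_
    rw [integral_finset_sum _ (fun k hk => intA i j k hj hk)]
    refine Finset.sum_congr rfl fun k hk => ?_
    rw [integral_const_mul _ _,
      (MA i j k (Finset.ne_of_mem_erase hj) (Finset.ne_of_mem_erase hk)).2]
  have valB : ∀ i : I, (∫ ω, ∑ j ∈ Finset.univ.erase i, (P i j) ^ 2 *
        (((R i + η i ω) * (RΔ i + ν i ω)) * ((R j + η j ω) * (RΔ j + ν j ω))) ∂μ)
      = ∑ j ∈ Finset.univ.erase i, (P i j) ^ 2 *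
          ((R i * RΔ i + ∫ ω, η i ω * ν i ω ∂μ)
            * (R j * RΔ j + ∫ ω, η j ω * ν j ω ∂μ)) := by
    intro i
    rw [integral_finset_sum _ (fun j hj => intB i j hj)]
    refine Finset.sum_congr rfl fun j hj => ?_
    rw [integral_const_mul _ _, (MB i j (Finset.ne_of_mem_erase hj)).2]
  rw [Finset.sum_congr rfl fun i _ => valA i, Finset.sum_congr rfl fun i _ => valB i]
  -- Step 4: algebra for part A
  have halgA : ∀ i : I, (∑ j ∈ Finset.univ.erase i, ∑ k ∈ Finset.univ.erase i,
        P i j * P i k * ((R j * R k + if k = j then (∫ ω, (η j ω) ^ 2 ∂μ) else 0)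
          * (RΔ i ^ 2 + ∫ ω, (ν i ω) ^ 2 ∂μ)))
      = ((1 - P i i) * R i) ^ 2 * (RΔ i ^ 2 + ∫ ω, (ν i ω) ^ 2 ∂μ)
        + ∑ j ∈ Finset.univ.erase i, (P i j) ^ 2 * (∫ ω, (η j ω) ^ 2 ∂μ)
            * (RΔ i ^ 2 + ∫ ω, (ν i ω) ^ 2 ∂μ) := by
    intro i
    have split : ∀ j ∈ Finset.univ.erase i, ∀ k ∈ Finset.univ.erase i,
        P i j * P i k * ((R j * R k + if k = j then (∫ ω, (η j ω) ^ 2 ∂μ) else 0)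
          * (RΔ i ^ 2 + ∫ ω, (ν i ω) ^ 2 ∂μ))
        = (P i j * R j) * (P i k * R k) * (RΔ i ^ 2 + ∫ ω, (ν i ω) ^ 2 ∂μ)
          + (if k = j then P i j * P i k * (∫ ω, (η j ω) ^ 2 ∂μ)
              * (RΔ i ^ 2 + ∫ ω, (ν i ω) ^ 2 ∂μ) else 0) := by
      intro j _ k _
      by_cases h : k = j <;> simp [h] <;> ring
    calc (∑ j ∈ Finset.univ.erase i, ∑ k ∈ Finset.univ.erase i,
        P i j * P i k * ((R j * R k + if k = j then (∫ ω, (η j ω) ^ 2 ∂μ) else 0)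
          * (RΔ i ^ 2 + ∫ ω, (ν i ω) ^ 2 ∂μ)))
        = ∑ j ∈ Finset.univ.erase i, ∑ k ∈ Finset.univ.erase i,
            ((P i j * R j) * (P i k * R k) * (RΔ i ^ 2 + ∫ ω, (ν i ω) ^ 2 ∂μ)
          + (if k = j then P i j * P i k * (∫ ω, (η j ω) ^ 2 ∂μ)
              * (RΔ i ^ 2 + ∫ ω, (ν i ω) ^ 2 ∂μ) else 0)) :=
          Finset.sum_congr rfl fun j hj => Finset.sum_congr rfl fun k hk =>
            split j hj k hk
      _ = (∑ j ∈ Finset.univ.erase i, ∑ k ∈ Finset.univ.erase i,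
            (P i j * R j) * (P i k * R k) * (RΔ i ^ 2 + ∫ ω, (ν i ω) ^ 2 ∂μ))
          + ∑ j ∈ Finset.univ.erase i, ∑ k ∈ Finset.univ.erase i,
            (if k = j then P i j * P i k * (∫ ω, (η j ω) ^ 2 ∂μ)
              * (RΔ i ^ 2 + ∫ ω, (ν i ω) ^ 2 ∂μ) else 0) := by
          rw [← Finset.sum_add_distrib]
          exact Finset.sum_congr rfl fun j hj => by rw [← Finset.sum_add_distrib]
      _ = ((1 - P i i) * R i) ^ 2 * (RΔ i ^ 2 + ∫ ω, (ν i ω) ^ 2 ∂μ)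
          + ∑ j ∈ Finset.univ.erase i, (P i j) ^ 2 * (∫ ω, (η j ω) ^ 2 ∂μ)
            * (RΔ i ^ 2 + ∫ ω, (ν i ω) ^ 2 ∂μ) := by
          congr 1
          · have : (∑ j ∈ Finset.univ.erase i, ∑ k ∈ Finset.univ.erase i,
                (P i j * R j) * (P i k * R k) * (RΔ i ^ 2 + ∫ ω, (ν i ω) ^ 2 ∂μ))
                = ((∑ j ∈ Finset.univ.erase i, P i j * R j)
                  * (∑ k ∈ Finset.univ.erase i, P i k * R k))
                  * (RΔ i ^ 2 + ∫ ω, (ν i ω) ^ 2 ∂μ) := by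
              rw [Finset.sum_mul_sum, Finset.sum_mul]
              exact Finset.sum_congr rfl fun j _ => by
                rw [Finset.sum_mul]
            rw [this, hPR i]; ring
          · refine Finset.sum_congr rfl fun j hj => ?_
            rw [Finset.sum_ite_eq' (Finset.univ.erase i) j
              (fun k => P i j * P i k * (∫ ω, (η j ω) ^ 2 ∂μ)
                * (RΔ i ^ 2 + ∫ ω, (ν i ω) ^ 2 ∂μ))]
            rw [if_pos hj]; ring
  rw [Finset.sum_congr rfl fun i _ => halgA i]
  -- Step 5: final algebra
  rw [Finset.sum_add_distrib]
  have e1 : (∑ i, ((1 - P i i) * R i) ^ 2 * (RΔ i ^ 2 + ∫ ω, (ν i ω) ^ 2 ∂μ))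
      = (∑ i, (1 - P i i) ^ 2 * R i ^ 2 * RΔ i ^ 2)
        + (∑ i, (1 - P i i) ^ 2 * R i ^ 2 * (∫ ω, (ν i ω) ^ 2 ∂μ)) := by
    rw [← Finset.sum_add_distrib]
    exact Finset.sum_congr rfl fun i _ => by ring
  have e2 : (∑ i, ∑ j ∈ Finset.univ.erase i, (P i j) ^ 2 * (∫ ω, (η j ω) ^ 2 ∂μ)
        * (RΔ i ^ 2 + ∫ ω, (ν i ω) ^ 2 ∂μ))
      = (∑ i, ∑ j ∈ Finset.univ.erase i, (P i j) ^ 2 *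
            (∫ ω, (ν i ω) ^ 2 ∂μ) * (∫ ω, (η j ω) ^ 2 ∂μ))
        + (∑ i, ∑ j ∈ Finset.univ.erase i, (P i j) ^ 2 *
            RΔ i ^ 2 * (∫ ω, (η j ω) ^ 2 ∂μ)) := by
    rw [← Finset.sum_add_distrib]
    refine Finset.sum_congr rfl fun i _ => ?_
    rw [← Finset.sum_add_distrib]
    exact Finset.sum_congr rfl fun j _ => by ring
  have e3 : (∑ i, ∑ j ∈ Finset.univ.erase i, (P i j) ^ 2 *
        ((R i * RΔ i + ∫ ω, η i ω * ν i ω ∂μ)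
          * (R j * RΔ j + ∫ ω, η j ω * ν j ω ∂μ)))
      = ∑ i, ∑ j ∈ Finset.univ.erase i, (P i j) ^ 2 *
            (R i * RΔ i * R j * RΔ j
              + (∫ ω, η i ω * ν i ω ∂μ) * R j * RΔ j
              + R i * RΔ i * (∫ ω, η j ω * ν j ω ∂μ)
              + (∫ ω, η i ω * ν i ω ∂μ) * (∫ ω, η j ω * ν j ω ∂μ)) :=
    Finset.sum_congr rfl fun i _ => Finset.sum_congr rfl fun j _ => by ring
  rw [e1, e2, e3]
  ring
end
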